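/- The equivalence relation ≅ on ReifiedApp, generated by the congruence rule for LiftA2, the four applicative functor laws (left identity, right identity, associativity, naturality), and reflexivity, symmetry, transitivity, is sound with respect to interpretation into any lawful applicative functor: if d1 ≅ d2, then interpA interpE d1 is equal (up to the applicative functor's lawful equivalence) to interpA interpE d2, for any effect interpretation interpE : ∀ A, E A → F A into a lawful applicative functor F. -/
import Mathlib


inductive ReifiedApp (E : Type → Type) : Type → Type 1 where
  | EmbedA {R : Type} (e : E R) : ReifiedApp E R
  | Pure {R : Type} (r : R) : ReifiedApp E R
  | LiftA2 {X Y R : Type} (f : X → Y → R) (a : ReifiedApp E X) (b : ReifiedApp E Y) :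
      ReifiedApp E R

/-- The adverb theory ≅ of the `Statically` adverb. -/
inductive AppEq (E : Type → Type) : ∀ {R : Type}, ReifiedApp E R → ReifiedApp E R → Prop where
  | congruence {X Y R : Type} (f : X → Y → R)
      {a1 a2 : ReifiedApp E X} {b1 b2 : ReifiedApp E Y} :
      AppEq E a1 a2 → AppEq E b1 b2 →
      AppEq E (.LiftA2 f a1 b1) (.LiftA2 f a2 b2)
  | left_id {A B : Type} (a : A) (f : A → B → B) (b : ReifiedApp E B) :
      (∀ y, (fun _ x => x) a y = f a y) →
      AppEq E (.LiftA2 f (.Pure a) b) b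
  | right_id {A B : Type} (b : B) (f : A → B → A) (a : ReifiedApp E A) :
      (∀ x, (fun x _ => x) x b = f x b) →
      AppEq E (.LiftA2 f a (.Pure b)) a
  | assoc {A B C R : Type} (f : A → B → C → R) (g : B → C → A → R)
      (a : ReifiedApp E A) (b : ReifiedApp E B) (c : ReifiedApp E C) :
      (∀ x y z, f x y z = g y z x) →
      AppEq E (.LiftA2 (fun h z => h z) (.LiftA2 f a b) c)
              (.LiftA2 (fun x h => h x) a (.LiftA2 g b c))
  | naturality {A B C X Y R : Type} (q : A → B → X) (p : X → C → R)
      (g : B → C → Y) (f : A → Y → R)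
      (a : ReifiedApp E A) (b : ReifiedApp E B) (c : ReifiedApp E C) :
      (∀ x y z, p (q x y) z = f x (g y z)) →
      AppEq E (.LiftA2 p (.LiftA2 q a b) c) (.LiftA2 f a (.LiftA2 g b c))
  | refl {R : Type} (a : ReifiedApp E R) : AppEq E a a
  | symm {R : Type} {a b : ReifiedApp E R} : AppEq E a b → AppEq E b a
  | trans {R : Type} {a b c : ReifiedApp E R} : AppEq E a b → AppEq E b c → AppEq E a c

def interpA {E F : Type → Type}
    (pure : ∀ {A : Type}, A → F A)
    (liftA2 : ∀ {A B C : Type}, (A → B → C) → F A → F B → F C)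
    (interpE : ∀ {A : Type}, E A → F A) :
    ∀ {R : Type}, ReifiedApp E R → F R
  | _, .EmbedA e => interpE e
  | _, .Pure r => pure r
  | _, .LiftA2 f a b => liftA2 f (interpA pure liftA2 interpE a) (interpA pure liftA2 interpE b)

/-- Soundness of the `Statically` adverb theory with respect to interpretation
into any lawful applicative functor. -/
theorem statically_sound
    (E F : Type → Type)
    (pure : ∀ {A : Type}, A → F A)
    (liftA2 : ∀ {A B C : Type}, (A → B → C) → F A → F B → F C)
    (Equiv : ∀ {A : Type}, F A → F A → Prop)
    (equiv : ∀ {A : Type}, Equivalence (@Equiv A))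
    (congruence : ∀ {X Y R : Type} (f : X → Y → R) (a1 a2 : F X) (b1 b2 : F Y),
      Equiv a1 a2 → Equiv b1 b2 → Equiv (liftA2 f a1 b1) (liftA2 f a2 b2))
    (left_id : ∀ {A B : Type} (a : A) (f : A → B → B) (b : F B),
      (∀ y, (fun _ x => x) a y = f a y) → Equiv (liftA2 f (pure a) b) b)
    (right_id : ∀ {A B : Type} (b : B) (f : A → B → A) (a : F A),
      (∀ x, (fun x _ => x) x b = f x b) → Equiv (liftA2 f a (pure b)) a)
    (assoc : ∀ {A B C R : Type} (f : A → B → C → R) (g : B → C → A → R)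
      (a : F A) (b : F B) (c : F C),
      (∀ x y z, f x y z = g y z x) →
      Equiv (liftA2 (fun h z => h z) (liftA2 f a b) c)
            (liftA2 (fun x h => h x) a (liftA2 g b c)))
    (naturality : ∀ {A B C X Y R : Type} (q : A → B → X) (p : X → C → R)
      (g : B → C → Y) (f : A → Y → R) (a : F A) (b : F B) (c : F C),
      (∀ x y z, p (q x y) z = f x (g y z)) →
      Equiv (liftA2 p (liftA2 q a b) c) (liftA2 f a (liftA2 g b c)))
    (interpE : ∀ {A : Type}, E A → F A)
    {R : Type} (d1 d2 : ReifiedApp E R) :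
    AppEq E d1 d2 →
    Equiv (interpA pure liftA2 interpE d1) (interpA pure liftA2 interpE d2) := by
  intro h
  induction h with
  | congruence f h1 h2 ih1 ih2 => exact congruence f _ _ _ _ ih1 ih2
  | left_id a f b hf => exact left_id a f _ hf
  | right_id b f a hf => exact right_id b f _ hf
  | assoc f g a b c hf => exact assoc f g _ _ _ hf
  | naturality q p g f a b c hf => exact naturality q p g f _ _ _ hf
  | refl a => exact (equiv).refl _
  | symm _ ih => exact (equiv).symm ih
  | trans _ _ ih1 ih2 => exact (equiv).trans ih1 ih2
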